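/- arXiv:2603.04637 — 3 statements merged into one kernel-verified Lean document; each statement's English description precedes it below -/
import Mathlib

section
/- The first Coxeter integral evaluates to a rational multiple of π²: ∫_{0}^{π/2} arccos( cos θ / (1 + 2 cos θ) ) dθ = 5π²/24. -/
open Real Set MeasureTheory intervalIntegral

/-!
Substituting `θ = 2 arctan x` turns `cos θ / (1 + 2 cos θ)` into `(1 - y²) / (1 + y²)` with
`y = 1 / √(2 - x²)`, whose arccos is `2 arctan y`; so the integral is
`4 ∫₀¹ arctan (1 / √(2 - x²)) / (1 + x²) dx`.

Writing `arctan (1 / s) = ∫₀¹ s / (s² + a²) da`, integrating first in `x` (partial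
fractions) and then by parts in `a` shows that this equals Ahmed's integral
`∫₀¹ arctan √(2 + x²) / ((1 + x²) √(2 + x²)) dx`.
As `arctan s = π / 2 - arctan (1 / s)`, Ahmed's integral is `π² / 12 - W` with
`W = ∫₀¹ arctan (1 / √(2 + x²)) / ((1 + x²) √(2 + x²)) dx`, and the same representation
of `arctan (1 / s)` makes `W` the integral of `1 / ((1 + x²) (2 + x² + t²))` over the
unit square; integrating in the other order gives `W = π² / 16 - W`. Hence the value
`4 · 5π² / 96`.
-/

theorem intervalIntegral_swap_of_continuousOn {E : Type*} [NormedAddCommGroup E]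
    [NormedSpace ℝ E] {a b c d : ℝ} (hab : a ≤ b) (hcd : c ≤ d) {F : ℝ → ℝ → E}
    (hF : ContinuousOn (Function.uncurry F) (Icc a b ×ˢ Icc c d)) :
    ∫ x in a..b, ∫ y in c..d, F x y = ∫ y in c..d, ∫ x in a..b, F x y := by
  simp only [integral_of_le hab, integral_of_le hcd]
  apply integral_integral_swap
  rw [Measure.prod_restrict, ← Measure.volume_eq_prod]
  exact (hF.integrableOn_compact (isCompact_Icc.prod isCompact_Icc)).mono_set
    (prod_mono Ioc_subset_Icc_self Ioc_subset_Icc_self)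

theorem integral_one_div_sq_add_sq {s : ℝ} (hs : 0 < s) (a b : ℝ) :
    ∫ u in a..b, 1 / (s ^ 2 + u ^ 2) = (arctan (b / s) - arctan (a / s)) / s := by
  have h (u : ℝ) : 1 / (s ^ 2 + u ^ 2) = (s ^ 2)⁻¹ * (1 + (u / s) ^ 2)⁻¹ := by
    field_simp
  simp_rw [h, intervalIntegral.integral_const_mul,
    integral_comp_div (fun v => (1 + v ^ 2)⁻¹) hs.ne', integral_inv_one_add_sq, smul_eq_mul]
  field_simp

theorem hasDerivAt_arctan_mul_div_sqrt {c d k x : ℝ} (h : 0 < c + d * x ^ 2) :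
    HasDerivAt (fun y => arctan (k * y / √(c + d * y ^ 2)))
      (k * c / (√(c + d * x ^ 2) * (c + (d + k ^ 2) * x ^ 2))) x := by
  have hq : HasDerivAt (fun y => c + d * y ^ 2) (d * (2 * x)) x :=
    (((hasDerivAt_pow 2 x).const_mul d).const_add c).congr_deriv (by norm_num)
  have hsq := sq_sqrt h.le
  have hs : 0 < √(c + d * x ^ 2) := sqrt_pos.2 h
  refine (((hasDerivAt_id x).const_mul k).div (hq.sqrt h.ne') hs.ne').arctan.congr_deriv ?_
  simp only [Pi.div_apply, id]
  generalize √(c + d * x ^ 2) = s at hs hsq ⊢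
  obtain rfl : c = s ^ 2 - d * x ^ 2 := by linarith
  rw [show s ^ 2 - d * x ^ 2 + (d + k ^ 2) * x ^ 2 = s ^ 2 + k ^ 2 * x ^ 2 by ring]
  field_simp

theorem hasDerivAt_arctan_sqrt_add_sq {c x : ℝ} (h : 0 < c + x ^ 2) :
    HasDerivAt (fun y => arctan √(c + y ^ 2)) (x / (√(c + x ^ 2) * (1 + c + x ^ 2))) x := by
  have hq : HasDerivAt (fun y => c + y ^ 2) (2 * x) x :=
    ((hasDerivAt_pow 2 x).const_add c).congr_deriv (by norm_num)
  refine (hq.sqrt h.ne').arctan.congr_deriv ?_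
  have hs : 0 < √(c + x ^ 2) := sqrt_pos.2 h
  rw [sq_sqrt h.le]
  have : 1 + (c + x ^ 2) ≠ 0 := by linarith
  rw [show 1 + c + x ^ 2 = 1 + (c + x ^ 2) by ring]
  field_simp

theorem cos_two_mul_arctan (x : ℝ) : cos (2 * arctan x) = (1 - x ^ 2) / (1 + x ^ 2) := by
  rw [cos_two_mul, cos_sq_arctan]
  field_simp
  ring

theorem arccos_one_sub_sq_div_one_add_sq {y : ℝ} (hy : 0 ≤ y) :
    arccos ((1 - y ^ 2) / (1 + y ^ 2)) = 2 * arctan y := by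
  rw [← cos_two_mul_arctan, arccos_cos (by linarith [arctan_nonneg.2 hy])
    (by linarith [arctan_lt_pi_div_two y])]

theorem integral_deriv_arctan_mul_div_sqrt {a b c d k : ℝ}
    (h : ∀ x ∈ uIcc a b, 0 < c + d * x ^ 2) :
    ∫ x in a..b, k * c / (√(c + d * x ^ 2) * (c + (d + k ^ 2) * x ^ 2)) =
      arctan (k * b / √(c + d * b ^ 2)) - arctan (k * a / √(c + d * a ^ 2)) := by
  refine integral_eq_sub_of_hasDerivAt (fun x hx => hasDerivAt_arctan_mul_div_sqrt (h x hx)) ?_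
  refine (continuousOn_const.div (by fun_prop) fun x hx => ?_).intervalIntegrable
  have := h x hx
  have : 0 < c + (d + k ^ 2) * x ^ 2 := by nlinarith [sq_nonneg (k * x)]
  positivity

theorem arctan_inv_eq_integral {s : ℝ} (hs : 0 < s) :
    arctan s⁻¹ = ∫ u in (0:ℝ)..1, s / (s ^ 2 + u ^ 2) := by
  simp_rw [div_eq_mul_one_div s, intervalIntegral.integral_const_mul,
    integral_one_div_sq_add_sq hs]
  field_simp
  simp

theorem integral_one_div_one_add_sq_mul_sqrt_two_add_sq :
    ∫ x in (0:ℝ)..1, 1 / ((1 + x ^ 2) * √(2 + x ^ 2)) = π / 6 := calc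
  _ = ∫ x in (0:ℝ)..1, 1 * 2 / (√(2 + 1 * x ^ 2) * (2 + (1 + 1 ^ 2) * x ^ 2)) :=
    integral_congr fun x _ => by field_simp; ring
  _ = π / 6 := by
    rw [integral_deriv_arctan_mul_div_sqrt fun x _ => by positivity]
    norm_num

theorem integral_arctan_inv_sqrt_two_add_sq_div :
    ∫ x in (0:ℝ)..1, arctan (√(2 + x ^ 2))⁻¹ / ((1 + x ^ 2) * √(2 + x ^ 2)) =
      π ^ 2 / 32 := by
  set w : ℝ → ℝ := fun x => arctan (√(2 + x ^ 2))⁻¹ / ((1 + x ^ 2) * √(2 + x ^ 2))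
  have hw : Continuous w := by fun_prop (disch := intros; positivity)
  let F : ℝ → ℝ → ℝ := fun x t => 1 / ((1 + x ^ 2) * (2 + x ^ 2 + t ^ 2))
  have inner_t (x : ℝ) : ∫ t in (0:ℝ)..1, F x t = w x := by
    have hs : 0 < √(2 + x ^ 2) := by positivity
    simp only [F, w]
    rw [arctan_inv_eq_integral hs, ← intervalIntegral.integral_div]
    refine integral_congr fun t _ => ?_
    rw [sq_sqrt (by positivity)]
    field_simp
  have inner_x (t : ℝ) : ∫ x in (0:ℝ)..1, F x t = π / 4 * (1 / (1 + t ^ 2)) - w t := by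
    have hs : 0 < √(2 + t ^ 2) := by positivity
    simp only [F, w]
    have hF (x : ℝ) : 1 / ((1 + x ^ 2) * (2 + x ^ 2 + t ^ 2)) =
        (1 / (1 + x ^ 2) - 1 / (√(2 + t ^ 2) ^ 2 + x ^ 2)) / (1 + t ^ 2) := by
      rw [sq_sqrt (by positivity)]
      field_simp
      ring
    simp_rw [hF, intervalIntegral.integral_div]
    rw [intervalIntegral.integral_sub
      ((Continuous.intervalIntegrable (by fun_prop (disch := intros; positivity))) _ _)
      ((Continuous.intervalIntegrable (by fun_prop (disch := intros; positivity))) _ _),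
      integral_one_div_one_add_sq, integral_one_div_sq_add_sq hs]
    simp only [arctan_one, arctan_zero, sub_zero, one_div, zero_div]
    field_simp
  have hswap := intervalIntegral_swap_of_continuousOn zero_le_one zero_le_one
    (F := F) (by fun_prop (disch := intros; positivity))
  simp_rw [inner_t, inner_x] at hswap
  rw [intervalIntegral.integral_sub
    ((Continuous.intervalIntegrable (by fun_prop (disch := intros; positivity))) _ _)
    (hw.intervalIntegrable 0 1),
    intervalIntegral.integral_const_mul, integral_one_div_one_add_sq, arctan_one,
    arctan_zero] at hswap
  linarith

theorem integral_ahmed :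
    ∫ x in (0:ℝ)..1, arctan √(2 + x ^ 2) / ((1 + x ^ 2) * √(2 + x ^ 2)) =
      5 * π ^ 2 / 96 := by
  have h (x : ℝ) : arctan √(2 + x ^ 2) / ((1 + x ^ 2) * √(2 + x ^ 2)) =
      π / 2 * (1 / ((1 + x ^ 2) * √(2 + x ^ 2))) -
        arctan (√(2 + x ^ 2))⁻¹ / ((1 + x ^ 2) * √(2 + x ^ 2)) := by
    rw [arctan_inv_of_pos (by positivity)]
    ring
  simp_rw [h]
  rw [intervalIntegral.integral_sub
      ((Continuous.intervalIntegrable (by fun_prop (disch := intros; positivity))) _ _)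
      ((Continuous.intervalIntegrable (by fun_prop (disch := intros; positivity))) _ _),
    intervalIntegral.integral_const_mul, integral_one_div_one_add_sq_mul_sqrt_two_add_sq,
    integral_arctan_inv_sqrt_two_add_sq_div]
  ring

theorem two_sub_sq_pos_of_mem_uIcc {x : ℝ} (hx : x ∈ uIcc (0:ℝ) 1) : 0 < 2 - x ^ 2 := by
  rw [uIcc_of_le zero_le_one] at hx
  nlinarith [hx.1, hx.2]

theorem integral_sqrt_three_div_one_add_sq_mul_sqrt_two_sub_sq :
    ∫ x in (0:ℝ)..1, √3 / ((1 + x ^ 2) * √(2 - x ^ 2)) = π / 3 := calc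
  _ = ∫ x in (0:ℝ)..1, √3 * 2 / (√(2 + -1 * x ^ 2) * (2 + (-1 + √3 ^ 2) * x ^ 2)) :=
    integral_congr fun x hx => by
      have : 0 < √(2 - x ^ 2) := sqrt_pos.2 (two_sub_sq_pos_of_mem_uIcc hx)
      rw [sq_sqrt zero_le_three, neg_one_mul, ← sub_eq_add_neg]
      field_simp
      ring
  _ = π / 3 := by
    rw [integral_deriv_arctan_mul_div_sqrt fun x hx => by
      linarith [two_sub_sq_pos_of_mem_uIcc hx]]
    norm_num

theorem integral_div_two_add_sq_sub_sq_mul_sqrt_two_sub_sq (a : ℝ) :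
    ∫ x in (0:ℝ)..1, a / ((2 + a ^ 2 - x ^ 2) * √(2 - x ^ 2)) =
      arctan (a / √(2 + a ^ 2)) / √(2 + a ^ 2) := by
  have hsa : 0 < √(2 + a ^ 2) := by positivity
  have hk : (a / √(2 + a ^ 2)) ^ 2 = a ^ 2 / (2 + a ^ 2) := by
    rw [div_pow, sq_sqrt (by positivity)]
  calc _ = ∫ x in (0:ℝ)..1, a / √(2 + a ^ 2) * 2 / (√(2 + -1 * x ^ 2) *
        (2 + (-1 + (a / √(2 + a ^ 2)) ^ 2) * x ^ 2)) / √(2 + a ^ 2) :=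
      integral_congr fun x hx => by
        have h2 := two_sub_sq_pos_of_mem_uIcc hx
        have : 0 < 2 + a ^ 2 - x ^ 2 := by nlinarith
        have : 0 < √(2 - x ^ 2) := sqrt_pos.2 h2
        rw [hk, neg_one_mul, ← sub_eq_add_neg, show 2 + (-1 + a ^ 2 / (2 + a ^ 2)) * x ^ 2 =
          2 * (2 + a ^ 2 - x ^ 2) / (2 + a ^ 2) by field_simp; ring]
        field_simp
        rw [sq_sqrt (by positivity)]
    _ = _ := by
      rw [intervalIntegral.integral_div, integral_deriv_arctan_mul_div_sqrt fun x hx => by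
        linarith [two_sub_sq_pos_of_mem_uIcc hx]]
      norm_num

theorem integral_sqrt_two_sub_sq_div_one_add_sq_mul (a : ℝ) :
    ∫ x in (0:ℝ)..1, √(2 - x ^ 2) / ((1 + x ^ 2) * (2 + a ^ 2 - x ^ 2)) =
      (π / √3 - a * arctan (a / √(2 + a ^ 2)) / √(2 + a ^ 2)) / (3 + a ^ 2) := by
  have hpos {x : ℝ} (hx : x ∈ uIcc (0:ℝ) 1) : 0 < √(2 - x ^ 2) ∧ 0 < 2 + a ^ 2 - x ^ 2 :=
    ⟨sqrt_pos.2 (two_sub_sq_pos_of_mem_uIcc hx), by nlinarith [two_sub_sq_pos_of_mem_uIcc hx]⟩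
  have hfrac : ∀ x ∈ uIcc (0:ℝ) 1, √(2 - x ^ 2) / ((1 + x ^ 2) * (2 + a ^ 2 - x ^ 2)) =
      (√3 * (√3 / ((1 + x ^ 2) * √(2 - x ^ 2))) -
        a * (a / ((2 + a ^ 2 - x ^ 2) * √(2 - x ^ 2)))) / (3 + a ^ 2) := by
    intro x hx
    obtain ⟨hs, hd⟩ := hpos hx
    have hs2 : √(2 - x ^ 2) ^ 2 = 2 - x ^ 2 := sq_sqrt (two_sub_sq_pos_of_mem_uIcc hx).le
    field_simp
    rw [sq_sqrt zero_le_three]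
    linear_combination (3 + a ^ 2) * hs2
  rw [integral_congr hfrac, intervalIntegral.integral_div, intervalIntegral.integral_sub,
    intervalIntegral.integral_const_mul, intervalIntegral.integral_const_mul,
    integral_sqrt_three_div_one_add_sq_mul_sqrt_two_sub_sq,
    integral_div_two_add_sq_sub_sq_mul_sqrt_two_sub_sq]
  · field_simp
    linear_combination π * √(2 + a ^ 2) * mul_self_sqrt zero_le_three
  all_goals
    refine ((continuousOn_const.div (by fun_prop) fun x hx => ?_).intervalIntegrable).const_mul _
  all_goals obtain ⟨_, _⟩ := hpos hx; positivity

theorem integral_mul_arctan_div_sqrt_two_add_sq :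
    ∫ a in (0:ℝ)..1, a * arctan (a / √(2 + a ^ 2)) / ((3 + a ^ 2) * √(2 + a ^ 2)) =
      π ^ 2 / 18 -
        ∫ a in (0:ℝ)..1, arctan √(2 + a ^ 2) / ((1 + a ^ 2) * √(2 + a ^ 2)) := by
  have hu (a : ℝ) : HasDerivAt (fun y => arctan (y / √(2 + y ^ 2)))
      (1 / ((1 + a ^ 2) * √(2 + a ^ 2))) a := by
    convert hasDerivAt_arctan_mul_div_sqrt (c := 2) (d := 1) (k := 1) (x := a) (by positivity)
      using 1 <;> norm_num
    field_simp
  have hv (a : ℝ) : HasDerivAt (fun y => arctan √(2 + y ^ 2))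
      (a / ((3 + a ^ 2) * √(2 + a ^ 2))) a := by
    convert hasDerivAt_arctan_sqrt_add_sq (c := 2) (x := a) (by positivity) using 1
    ring
  rw [integral_congr fun a _ =>
      show a * arctan (a / √(2 + a ^ 2)) / ((3 + a ^ 2) * √(2 + a ^ 2))
        = arctan (a / √(2 + a ^ 2)) * (a / ((3 + a ^ 2) * √(2 + a ^ 2))) by ring,
    integral_mul_deriv_eq_deriv_mul (fun a _ => hu a) (fun a _ => hv a)
      (Continuous.intervalIntegrable (by fun_prop (disch := intros; positivity)) _ _)
      (Continuous.intervalIntegrable (by fun_prop (disch := intros; positivity)) _ _),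
    integral_congr fun a _ => show 1 / ((1 + a ^ 2) * √(2 + a ^ 2)) * arctan √(2 + a ^ 2)
      = arctan √(2 + a ^ 2) / ((1 + a ^ 2) * √(2 + a ^ 2)) by ring]
  norm_num
  ring

theorem integral_arctan_inv_sqrt_two_sub_sq_div :
    ∫ x in (0:ℝ)..1, arctan (√(2 - x ^ 2))⁻¹ / (1 + x ^ 2) = 5 * π ^ 2 / 96 := by
  let F : ℝ → ℝ → ℝ := fun x a => √(2 - x ^ 2) / ((1 + x ^ 2) * (2 + a ^ 2 - x ^ 2))
  have inner_a : ∀ x ∈ uIcc (0:ℝ) 1,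
      arctan (√(2 - x ^ 2))⁻¹ / (1 + x ^ 2) = ∫ a in (0:ℝ)..1, F x a := by
    intro x hx
    have h2 := two_sub_sq_pos_of_mem_uIcc hx
    rw [arctan_inv_eq_integral (sqrt_pos.2 h2), ← intervalIntegral.integral_div]
    refine integral_congr fun a _ => ?_
    simp only [F, sq_sqrt h2.le, div_div]
    ring_nf
  have hF : ContinuousOn (Function.uncurry F) (Icc 0 1 ×ˢ Icc 0 1) := by
    refine ContinuousOn.div (by fun_prop) (by fun_prop) fun p hp => ?_
    have := two_sub_sq_pos_of_mem_uIcc (x := p.1) (by simpa [uIcc_of_le] using hp.1)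
    have : 0 < 2 + p.2 ^ 2 - p.1 ^ 2 := by nlinarith
    positivity
  have inner_x (a : ℝ) : ∫ x in (0:ℝ)..1, F x a = π / √3 * (1 / (√3 ^ 2 + a ^ 2)) -
      a * arctan (a / √(2 + a ^ 2)) / ((3 + a ^ 2) * √(2 + a ^ 2)) := by
    rw [integral_sqrt_two_sub_sq_div_one_add_sq_mul, sq_sqrt zero_le_three]
    field_simp
  rw [integral_congr inner_a, intervalIntegral_swap_of_continuousOn zero_le_one zero_le_one hF]
  simp_rw [inner_x]
  rw [intervalIntegral.integral_sub, intervalIntegral.integral_const_mul,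
    integral_one_div_sq_add_sq (by positivity), integral_mul_arctan_div_sqrt_two_add_sq,
    integral_ahmed]
  · norm_num
    rw [div_mul_div_comm, mul_self_sqrt zero_le_three]
    ring
  all_goals exact Continuous.intervalIntegrable (by fun_prop (disch := intros; positivity)) _ _

theorem arccos_cos_div_one_add_two_cos_two_mul_arctan {x : ℝ} (hx : x ^ 2 < 2) :
    arccos (cos (2 * arctan x) / (1 + 2 * cos (2 * arctan x))) =
      2 * arctan (√(2 - x ^ 2))⁻¹ := by
  have hs2 : (√(2 - x ^ 2))⁻¹ ^ 2 = 1 / (2 - x ^ 2) := by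
    rw [inv_pow, sq_sqrt (by linarith), one_div]
  have hy : 0 ≤ (√(2 - x ^ 2))⁻¹ := by positivity
  rw [← arccos_one_sub_sq_div_one_add_sq hy, hs2, cos_two_mul_arctan]
  have : 2 - x ^ 2 ≠ 0 := by linarith
  congr 1
  field_simp
  ring

theorem coxeter_first_integral :
    ∫ θ in (0:ℝ)..(π/2), Real.arccos (Real.cos θ / (1 + 2 * Real.cos θ))
      = 5 * π ^ 2 / 24 := by
  have hsub := integral_comp_mul_deriv_of_deriv_nonneg (a := 0) (b := 1)
    (f := fun x => 2 * arctan x) (f' := fun x => 2 / (1 + x ^ 2))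
    (g := fun θ => arccos (cos θ / (1 + 2 * cos θ))) (by fun_prop)
    (fun x _ => ((hasDerivAt_arctan x).const_mul 2).congr_deriv (by field_simp))
    (fun x _ => by positivity)
  have hintegrand : ∀ x ∈ uIcc (0:ℝ) 1,
      arccos (cos (2 * arctan x) / (1 + 2 * cos (2 * arctan x))) * (2 / (1 + x ^ 2)) =
        4 * (arctan (√(2 - x ^ 2))⁻¹ / (1 + x ^ 2)) := fun x hx => by
    rw [arccos_cos_div_one_add_two_cos_two_mul_arctan
      (by linarith [two_sub_sq_pos_of_mem_uIcc hx])]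
    ring
  simp only [Function.comp_apply, arctan_zero, arctan_one, mul_zero] at hsub
  rw [integral_congr hintegrand, intervalIntegral.integral_const_mul,
    integral_arctan_inv_sqrt_two_sub_sq_div] at hsub
  rw [show π / 2 = 2 * (π / 4) by ring, ← hsub]
  ring
end

section
/- For every λ > 0, the function I(λ) = ∫_{0}^{π/2} arccos( cos θ / (1 + λ cos θ) ) dθ is differentiable at λ, with derivative I′(λ) = ∫_{0}^{π/2} cos²θ / ( (1 + λ cos θ) · √( (1 + λ cos θ)² − cos²θ ) ) dθ. Formally: for all λ > 0, HasDerivAt (fun μ => ∫_{0}^{π/2} Real.arccos (cos θ / (1 + μ cos θ)) dθ) ( ∫_{0}^{π/2} cos²θ / ((1 + λ cos θ) * Real.sqrt ((1 + λ cos θ)² − cos²θ)) dθ ) λ. -/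
/-!
Differentiate under the integral sign. For `0 ≤ c ≤ 1` and `x > 0` the chain rule for `arccos`
gives the pointwise derivative `c² / ((1 + x c) √((1 + x c)² - c²))` of `x ↦ arccos (c / (1 + x c))`,
and since `(1 + x c)² - c² ≥ (x c)²` this derivative is at most `c / x ≤ 1 / x`. On the
neighbourhood `x > λ / 2` of `λ` the constant `2 / λ` therefore dominates the derivatives.
-/

open Real MeasureTheory Set

lemma hasDerivAt_arccos_div_one_add_mul {c μ : ℝ} (hc0 : 0 ≤ c) (hc1 : c ≤ 1) (hμ : 0 < μ) :
    HasDerivAt (fun x : ℝ => arccos (c / (1 + x * c)))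
      (c ^ 2 / ((1 + μ * c) * √((1 + μ * c) ^ 2 - c ^ 2))) μ := by
  have hd : 0 < 1 + μ * c := by positivity
  have hlt : c < 1 + μ * c := by nlinarith
  have hD : 0 < (1 + μ * c) ^ 2 - c ^ 2 := by nlinarith
  have hinner : HasDerivAt (fun x : ℝ => c / (1 + x * c)) (-(c * c) / (1 + μ * c) ^ 2) μ := by
    have hden : HasDerivAt (fun x : ℝ => 1 + x * c) c μ := by
      simpa using ((hasDerivAt_id μ).mul_const c).const_add 1
    exact ((hasDerivAt_const μ c).div hden hd.ne').congr_deriv (by ring)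
  have harccos : HasDerivAt arccos (-(1 / √(1 - (c / (1 + μ * c)) ^ 2))) (c / (1 + μ * c)) :=
    hasDerivAt_arccos (by linarith [div_nonneg hc0 hd.le])
      ((div_lt_one hd).2 (by nlinarith)).ne
  have hsqrt : √(1 - (c / (1 + μ * c)) ^ 2) = √((1 + μ * c) ^ 2 - c ^ 2) / (1 + μ * c) := by
    have h1 : 1 - (c / (1 + μ * c)) ^ 2 = ((1 + μ * c) ^ 2 - c ^ 2) / (1 + μ * c) ^ 2 := by
      field_simp
    rw [h1, sqrt_div hD.le, sqrt_sq hd.le]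
  refine (harccos.comp μ hinner).congr_deriv ?_
  have hS : 0 < √((1 + μ * c) ^ 2 - c ^ 2) := sqrt_pos.2 hD
  rw [hsqrt]
  field_simp

lemma abs_sq_div_mul_sqrt_le_one_div {c x : ℝ} (hc0 : 0 ≤ c) (hc1 : c ≤ 1) (hx : 0 < x) :
    |c ^ 2 / ((1 + x * c) * √((1 + x * c) ^ 2 - c ^ 2))| ≤ 1 / x := by
  have hxc : 0 ≤ x * c := mul_nonneg hx.le hc0
  have hd : 0 < 1 + x * c := by linarith
  rw [abs_of_nonneg (div_nonneg (sq_nonneg c) (mul_nonneg hd.le (sqrt_nonneg _)))]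
  have hsqrt : x * c ≤ √((1 + x * c) ^ 2 - c ^ 2) := le_sqrt_of_sq_le (by nlinarith)
  refine div_le_of_le_mul₀ (mul_nonneg hd.le (sqrt_nonneg _)) (by positivity) ?_
  calc c ^ 2 = 1 / x * (c * (x * c)) := by field_simp
    _ ≤ 1 / x * ((1 + x * c) * √((1 + x * c) ^ 2 - c ^ 2)) := by gcongr; linarith

theorem coxeter_family_hasDerivAt (lam : ℝ) (hlam : 0 < lam) :
    HasDerivAt
      (fun μ : ℝ => ∫ θ in (0:ℝ)..(π/2), Real.arccos (Real.cos θ / (1 + μ * Real.cos θ)))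
      (∫ θ in (0:ℝ)..(π/2),
        Real.cos θ ^ 2 /
          ((1 + lam * Real.cos θ) *
            Real.sqrt ((1 + lam * Real.cos θ) ^ 2 - Real.cos θ ^ 2)))
      lam := by
  have hcos : ∀ θ ∈ uIoc 0 (π / 2), 0 ≤ cos θ ∧ cos θ ≤ 1 := fun θ hθ => by
    rw [uIoc_of_le (by positivity)] at hθ
    exact ⟨cos_nonneg_of_mem_Icc ⟨by linarith [hθ.1, pi_pos], hθ.2⟩, cos_le_one θ⟩
  have hF_meas : ∀ x : ℝ, Measurable fun θ => arccos (cos θ / (1 + x * cos θ)) := fun x =>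
    continuous_arccos.measurable.comp (by fun_prop)
  refine (intervalIntegral.hasDerivAt_integral_of_dominated_loc_of_deriv_le
    (μ := volume) (a := 0) (b := π / 2)
    (F := fun x θ => arccos (cos θ / (1 + x * cos θ)))
    (F' := fun x θ => cos θ ^ 2 / ((1 + x * cos θ) * √((1 + x * cos θ) ^ 2 - cos θ ^ 2)))
    (s := Ioi (lam / 2)) (bound := fun _ => 1 / (lam / 2))
    (Ioi_mem_nhds (half_lt_self hlam)) ?_ ?_ ?_ ?_ intervalIntegrable_const ?_).2
  · exact .of_forall fun x => (hF_meas x).aestronglyMeasurable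
  · refine (intervalIntegrable_const (c := π)).mono_fun (hF_meas lam).aestronglyMeasurable
      (.of_forall fun θ => ?_)
    simp [abs_of_nonneg (arccos_nonneg _), arccos_le_pi, abs_of_nonneg pi_pos.le]
  · exact (by fun_prop : Measurable _).aestronglyMeasurable
  · refine .of_forall fun θ hθ x (hx : lam / 2 < x) => ?_
    calc _ ≤ 1 / x := abs_sq_div_mul_sqrt_le_one_div (hcos θ hθ).1 (hcos θ hθ).2 ((half_pos hlam).trans hx)
      _ ≤ 1 / (lam / 2) := one_div_le_one_div_of_le (half_pos hlam) hx.le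
  · refine .of_forall fun θ hθ x hx => ?_
    exact hasDerivAt_arccos_div_one_add_mul (hcos θ hθ).1 (hcos θ hθ).2 ((half_pos hlam).trans hx)
end

section
/- (Convergence of the improper parameter integral.) The function s ↦ ∫_{0}^{π/2} cos²θ / ( (1 + s cos θ) · √( (1 + s cos θ)² − cos²θ ) ) dθ is interval integrable on [0, 2] (in the sense IntervalIntegrable with respect to Lebesgue measure on [0,2]); in particular the improper integral ∫_{0}^{2} I′(s) ds = lim_{ε→0⁺} ∫_{ε}^{2} I′(s) ds exists and is finite. -/
/-!
For `0 < s ≤ 2` and `c = cos θ ∈ [0, 1]` the radicand `(1 + s c)² - c²` is at least `s / 2`: it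
is at least `1 - c² + 2 s c`, which is concave in `c` and equals `1` at `c = 0` and `2 s` at
`c = 1`. Since also `c² ≤ 1 ≤ 1 + s c`, the `θ`-integral is `O(s^(-1/2))`, which is integrable
at `0`; the improper integral then converges by continuity of `ε ↦ ∫_ε^2`.
-/

open Real MeasureTheory Set Filter Topology

theorem MeasureTheory.StronglyMeasurable.intervalIntegral_prod_right {α E : Type*}
    [MeasurableSpace α] [NormedAddCommGroup E] [NormedSpace ℝ E] {f : α × ℝ → E}
    (hf : StronglyMeasurable f) (a b : ℝ) :
    StronglyMeasurable fun x => ∫ y in a..b, f (x, y) :=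
  (hf.integral_prod_right' (ν := volume.restrict (Ioc a b))).sub
    (hf.integral_prod_right' (ν := volume.restrict (Ioc b a)))

theorem IntervalIntegrable.tendsto_integral_nhdsGT {E : Type*} [NormedAddCommGroup E]
    [NormedSpace ℝ E] {f : ℝ → E} {a b : ℝ} (hab : a < b) (hf : IntervalIntegrable f volume a b) :
    Tendsto (fun ε => ∫ s in ε..b, f s) (𝓝[>] a) (𝓝 (∫ s in a..b, f s)) := by
  have hcont :=
    intervalIntegral.continuousOn_primitive_interval_left ((intervalIntegrable_iff').1 hf)
  rw [uIcc_of_le hab.le] at hcont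
  exact (hcont a (left_mem_Icc.2 hab.le)).mono_of_mem_nhdsWithin (Icc_mem_nhdsGT hab)

theorem half_le_sq_one_add_mul_sub_sq {s c : ℝ} (hs0 : 0 ≤ s) (hs2 : s ≤ 2) (hc0 : 0 ≤ c)
    (hc1 : c ≤ 1) : s / 2 ≤ (1 + s * c) ^ 2 - c ^ 2 := by
  nlinarith [mul_nonneg hc0 (sub_nonneg.2 hc1), mul_nonneg (sub_nonneg.2 hc1) (sub_nonneg.2 hs2),
    mul_nonneg hc0 hs0, sq_nonneg (s * c)]

theorem sq_div_mul_sqrt_le {s c : ℝ} (hs0 : 0 < s) (hs2 : s ≤ 2) (hc0 : 0 ≤ c) (hc1 : c ≤ 1) :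
    c ^ 2 / ((1 + s * c) * √((1 + s * c) ^ 2 - c ^ 2)) ≤ √2 * s ^ (-(1 / 2) : ℝ) := by
  have hroot : √(s / 2) ≤ √((1 + s * c) ^ 2 - c ^ 2) :=
    Real.sqrt_le_sqrt (half_le_sq_one_add_mul_sub_sq hs0.le hs2 hc0 hc1)
  have hden : √(s / 2) ≤ (1 + s * c) * √((1 + s * c) ^ 2 - c ^ 2) :=
    hroot.trans <| le_mul_of_one_le_left (Real.sqrt_nonneg _) <|
      le_add_of_nonneg_right (mul_nonneg hs0.le hc0)
  calc c ^ 2 / ((1 + s * c) * √((1 + s * c) ^ 2 - c ^ 2))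
      ≤ 1 / √(s / 2) := div_le_div₀ zero_le_one (pow_le_one₀ hc0 hc1) (by positivity) hden
    _ = √2 * s ^ (-(1 / 2) : ℝ) := by
      rw [Real.rpow_neg hs0.le, ← Real.sqrt_eq_rpow, Real.sqrt_div' _ (by norm_num : (0:ℝ) ≤ 2)]
      field_simp

noncomputable def coxeterIntegrand (s θ : ℝ) : ℝ :=
  cos θ ^ 2 / ((1 + s * cos θ) * √((1 + s * cos θ) ^ 2 - cos θ ^ 2))

theorem measurable_coxeterIntegrand : Measurable fun p : ℝ × ℝ => coxeterIntegrand p.1 p.2 := by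
  unfold coxeterIntegrand
  fun_prop

theorem norm_integral_coxeterIntegrand_le {s : ℝ} (hs0 : 0 < s) (hs2 : s ≤ 2) :
    ‖∫ θ in (0 : ℝ)..π / 2, coxeterIntegrand s θ‖ ≤ π / 2 * (√2 * s ^ (-(1 / 2) : ℝ)) := by
  have hbound : ∀ θ ∈ uIoc 0 (π / 2), ‖coxeterIntegrand s θ‖ ≤ √2 * s ^ (-(1 / 2) : ℝ) := by
    intro θ hθ
    rw [uIoc_of_le (by positivity)] at hθ
    have hcos0 : 0 ≤ cos θ := cos_nonneg_of_mem_Icc ⟨by linarith [hθ.1, pi_pos], hθ.2⟩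
    rw [Real.norm_of_nonneg (by unfold coxeterIntegrand; positivity)]
    exact sq_div_mul_sqrt_le hs0 hs2 hcos0 (cos_le_one θ)
  calc _ ≤ (√2 * s ^ (-(1 / 2) : ℝ)) * |π / 2 - 0| :=
        intervalIntegral.norm_integral_le_of_norm_le_const hbound
    _ = π / 2 * (√2 * s ^ (-(1 / 2) : ℝ)) := by
        rw [sub_zero, abs_of_pos (by positivity), mul_comm]

theorem intervalIntegrable_integral_coxeterIntegrand :
    IntervalIntegrable (fun s => ∫ θ in (0 : ℝ)..π / 2, coxeterIntegrand s θ) volume 0 2 := by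
  have hdom : IntervalIntegrable (fun s : ℝ => π / 2 * (√2 * s ^ (-(1 / 2) : ℝ))) volume 0 2 :=
    ((intervalIntegral.intervalIntegrable_rpow' (by norm_num)).const_mul _).const_mul _
  refine hdom.mono_fun
    (measurable_coxeterIntegrand.stronglyMeasurable.intervalIntegral_prod_right 0 (π / 2)
      ).aestronglyMeasurable ?_
  filter_upwards [ae_restrict_mem measurableSet_uIoc] with s hs
  rw [uIoc_of_le zero_le_two] at hs
  exact (norm_integral_coxeterIntegrand_le hs.1 hs.2).trans (le_abs_self _)

theorem coxeter_improper_integrable :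
    IntervalIntegrable
      (fun s : ℝ => ∫ θ in (0:ℝ)..(π/2),
        Real.cos θ ^ 2 /
          ((1 + s * Real.cos θ) *
            Real.sqrt ((1 + s * Real.cos θ) ^ 2 - Real.cos θ ^ 2)))
      volume 0 2 ∧
    Filter.Tendsto
      (fun ε : ℝ => ∫ s in ε..2, ∫ θ in (0:ℝ)..(π/2),
        Real.cos θ ^ 2 /
          ((1 + s * Real.cos θ) *
            Real.sqrt ((1 + s * Real.cos θ) ^ 2 - Real.cos θ ^ 2)))
      (nhdsWithin 0 (Set.Ioi 0))
      (nhds (∫ s in (0:ℝ)..2, ∫ θ in (0:ℝ)..(π/2),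
        Real.cos θ ^ 2 /
          ((1 + s * Real.cos θ) *
            Real.sqrt ((1 + s * Real.cos θ) ^ 2 - Real.cos θ ^ 2)))) :=
  ⟨intervalIntegrable_integral_coxeterIntegrand,
    intervalIntegrable_integral_coxeterIntegrand.tendsto_integral_nhdsGT two_pos⟩
end
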